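/- Let θ: G → S be a unital premorphism, T an inverse intermediate extension of G̃^R with E(S) (Supp(T),θ)-meet complete, and θ*(A,g)=I_A θ(g) the canonical extension. Then any semigroup homomorphism κ: T → S extending θ satisfies κ(A,g) ≤ θ*(A,g) in the natural partial order, for all (A,g) ∈ T. -/

import Mathlib

variable {G : Type*} [Group G]

/-- `P*(G)`: the nonempty subsets of `G` (a semilattice under union). -/
abbrev PStar (G : Type*) [Group G] := {A : Set G // A.Nonempty}

/-- The semidirect product `P*(G) ⋊ G` (as a set: `P*(G) × G`). -/
abbrev SD (G : Type*) [Group G] := PStar G × G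

/-- Multiplication `(A,g)(B,h) = (A ∪ gB, gh)` in `P*(G) ⋊ G`. -/
def sdMul (x y : SD G) : SD G :=
  (⟨x.1.1 ∪ (fun a => x.2 * a) '' y.1.1, x.1.2.inl⟩, x.2 * y.2)

/-- The inverse `(g⁻¹A, g⁻¹)` of `(A,g)` in `P*(G) ⋊ G`. -/
def sdInv (x : SD G) : SD G :=
  (⟨(fun a => x.2⁻¹ * a) '' x.1.1, x.1.2.image _⟩, x.2⁻¹)

/-- The Birget–Rhodes expansion `G̃^R` sitting inside `P*(G) ⋊ G`:
pairs `(A,g)` with `A` finite and `{1,g} ⊆ A`. -/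
def BRset (G : Type*) [Group G] : Set (SD G) :=
  {x | x.1.1.Finite ∧ (1 : G) ∈ x.1.1 ∧ x.2 ∈ x.1.1}

/-- The element `({1,g}, g)` of `G̃^R`. -/
def iotaBR (g : G) : SD G := (⟨{1, g}, ⟨1, Or.inl rfl⟩⟩, g)

/-- The support of a subset `T` of `P*(G) ⋊ G`. -/
def Supp (T : Set (SD G)) : Set (PStar G) := {A | ∃ g : G, (A, g) ∈ T}

/-- An inverse monoid. -/
class InverseMonoid (S : Type*) extends Monoid S, Inv S where
  mul_inv_mul : ∀ a : S, a * a⁻¹ * a = a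
  inv_mul_inv : ∀ a : S, a⁻¹ * a * a⁻¹ = a⁻¹
  inv_unique : ∀ a b : S, a * b * a = a → b * a * b = b → b = a⁻¹

/-- A unital premorphism from a group to an inverse monoid. -/
def IsUnitalPremorphism {G S : Type*} [Group G] [InverseMonoid S] (θ : G → S) : Prop :=
  θ 1 = 1 ∧ (∀ g : G, θ g⁻¹ = (θ g)⁻¹) ∧
    ∀ g h : G, θ g⁻¹ * θ g * θ h = θ g⁻¹ * θ (g * h)

/-- The natural partial order on an inverse monoid: `s ≤ t` iff `s = e * t`
for some idempotent `e`. -/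
def natLe {S : Type*} [InverseMonoid S] (s t : S) : Prop :=
  ∃ e : S, e * e = e ∧ s = e * t

/-- `m` is the meet (greatest lower bound) of `X` with respect to the
natural partial order. -/
def IsMeet {S : Type*} [InverseMonoid S] (X : Set S) (m : S) : Prop :=
  (∀ x ∈ X, natLe m x) ∧ ∀ b : S, (∀ x ∈ X, natLe b x) → natLe b m

/-- The family `{θ(a)θ(a)⁻¹ : a ∈ A}` of idempotents. -/
def thFam {G S : Type*} [Group G] [InverseMonoid S] (θ : G → S) (A : Set G) : Set S :=
  (fun a => θ a * (θ a)⁻¹) '' A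

/-
Write `x = (A,g)` and `y = ({1},1) x ({1},1) = (A ∪ {1,g}, g)`; as `κ({1},1) = θ(1) = 1`,
`κ(y) = κ(x)`. The idempotent `F = y y⁻¹ = (A ∪ {1,g}, 1)` of `T` satisfies `F ({1,g},g) = y`, so
`κ(x) = κ(F) θ(g)` with `κ(F)` idempotent. For `a ∈ A`, `F` absorbs
`({1,a},a) ({1,a⁻¹},a⁻¹) = ({1,a},1)`, whose image is `θ(a) θ(a)⁻¹`; so `κ(F)` lies below every
`θ(a) θ(a)⁻¹` and hence below their meet `I_A`.
-/

lemma natLe_mul_right {S : Type*} [InverseMonoid S] {s t : S} (h : natLe s t) (u : S) :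
    natLe (s * u) (t * u) :=
  let ⟨e, he, hs⟩ := h
  ⟨e, he, by rw [hs, mul_assoc]⟩

section SemidirectProduct

variable {G : Type*} [Group G]

lemma iotaBR_mem_BRset (g : G) : iotaBR g ∈ BRset G :=
  ⟨(Set.finite_singleton g).insert 1, by simp [iotaBR], by simp [iotaBR]⟩

lemma sdMul_sdInv_self (z : SD G) : sdMul z (sdInv z) = (⟨z.1.1, z.1.2⟩, 1) :=
  Prod.ext (Subtype.ext (by ext; simp [sdMul, sdInv])) (mul_inv_cancel z.2)

lemma sdMul_sdMul_iotaBR_one (x : SD G) :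
    (sdMul (sdMul (iotaBR 1) x) (iotaBR 1)).1.1 = insert 1 (insert x.2 x.1.1) := by
  ext a
  simp only [sdMul, iotaBR, one_mul, mul_one, Set.image_id', Set.union_insert,
    Set.union_singleton, Set.image_insert_eq, Set.image_singleton, Set.mem_insert_iff,
    Set.mem_union, Set.mem_singleton_iff]
  tauto

variable {B : Set G} (hB : B.Nonempty)

lemma sdMul_idempotent_iotaBR {a : G} (h1 : 1 ∈ B) (ha : a ∈ B) :
    sdMul (⟨B, hB⟩, 1) (iotaBR a) = (⟨B, hB⟩, a) :=
  Prod.ext (Subtype.ext (by simp [sdMul, iotaBR, Set.insert_eq_of_mem, h1, ha])) (one_mul a)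

lemma sdMul_idempotent_iotaBR_mul_iotaBR_inv {a : G} (h1 : 1 ∈ B) (ha : a ∈ B) :
    sdMul (⟨B, hB⟩, 1) (sdMul (iotaBR a) (iotaBR a⁻¹)) = (⟨B, hB⟩, 1) :=
  Prod.ext
    (Subtype.ext (by simp [sdMul, iotaBR, Set.image_insert_eq, Set.insert_eq_of_mem, h1, ha]))
    (by simp [sdMul, iotaBR])

lemma sdMul_idempotent_self : sdMul (⟨B, hB⟩, (1 : G)) (⟨B, hB⟩, 1) = (⟨B, hB⟩, 1) :=
  Prod.ext (Subtype.ext (by simp [sdMul])) (one_mul 1)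

end SemidirectProduct

section Extension

variable {G S : Type*} [Group G] [InverseMonoid S] {θ : G → S} {T : Set (SD G)} {κ : SD G → S}

theorem exists_idempotent_mul_theta (hθ : IsUnitalPremorphism θ)
    (hmul : ∀ x ∈ T, ∀ y ∈ T, sdMul x y ∈ T) (hinv : ∀ x ∈ T, sdInv x ∈ T)
    (hBR : BRset G ⊆ T) (hκmul : ∀ x ∈ T, ∀ y ∈ T, κ (sdMul x y) = κ x * κ y)
    (hκext : ∀ g : G, κ (iotaBR g) = θ g) {x : SD G} (hx : x ∈ T) :
    ∃ e : S, e * e = e ∧ κ x = e * θ x.2 ∧ ∀ a ∈ x.1.1, e * (θ a * (θ a)⁻¹) = e := by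
  have hι (a : G) : iotaBR a ∈ T := hBR (iotaBR_mem_BRset a)
  set y := sdMul (sdMul (iotaBR 1) x) (iotaBR 1)
  have hyT : y ∈ T := hmul _ (hmul _ (hι 1) _ hx) _ (hι 1)
  have hκy : κ y = κ x := by
    rw [hκmul _ (hmul _ (hι 1) _ hx) _ (hι 1), hκmul _ (hι 1) _ hx, hκext, hθ.1, one_mul, mul_one]
  have hy₁ : y.1.1 = insert 1 (insert x.2 x.1.1) := sdMul_sdMul_iotaBR_one x
  have hy₂ : y.2 = x.2 := by simp [y, sdMul, iotaBR]
  have h1 : (1 : G) ∈ y.1.1 := by simp [hy₁]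
  set F := sdMul y (sdInv y)
  have hF : F = (⟨y.1.1, y.1.2⟩, 1) := sdMul_sdInv_self y
  have hFT : F ∈ T := hmul _ hyT _ (hinv _ hyT)
  refine ⟨κ F, ?_, ?_, fun a ha => ?_⟩
  · rw [← hκmul _ hFT _ hFT, hF, sdMul_idempotent_self]
  · calc κ x = κ (sdMul F (iotaBR y.2)) := by
          rw [hF, sdMul_idempotent_iotaBR _ h1 (by simp [hy₁, hy₂]), hκy]
      _ = κ F * θ x.2 := by rw [hκmul _ hFT _ (hι _), hκext, hy₂]
  · have hιι : sdMul (iotaBR a) (iotaBR a⁻¹) ∈ T := hmul _ (hι a) _ (hι a⁻¹)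
    calc κ F * (θ a * (θ a)⁻¹) = κ (sdMul F (sdMul (iotaBR a) (iotaBR a⁻¹))) := by
          rw [hκmul _ hFT _ hιι, hκmul _ (hι a) _ (hι a⁻¹), hκext, hκext, hθ.2.1]
      _ = κ F := by rw [hF, sdMul_idempotent_iotaBR_mul_iotaBR_inv _ h1 (by simp [hy₁, ha])]

end Extension

/-- with `θ`, `T`, `I` as in the extension theorem, any semigroup
homomorphism `κ : T → S` extending `θ` satisfies `κ(A,g) ≤ θ*(A,g) = I_A θ(g)`
in the natural partial order. -/
theorem stmt8 {G S : Type*} [Group G] [InverseMonoid S] (θ : G → S)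
    (hθ : IsUnitalPremorphism θ)
    (T : Set (SD G))
    (hmul : ∀ x ∈ T, ∀ y ∈ T, sdMul x y ∈ T)
    (hinv : ∀ x ∈ T, sdInv x ∈ T)
    (hBR : BRset G ⊆ T)
    (I : Set G → S)
    (hI : ∀ A : PStar G, A ∈ Supp T → IsMeet (thFam θ A.1) (I A.1))
    (κ : SD G → S)
    (hκmul : ∀ x ∈ T, ∀ y ∈ T, κ (sdMul x y) = κ x * κ y)
    (hκext : ∀ g : G, κ (iotaBR g) = θ g) :
    ∀ x ∈ T, natLe (κ x) (I x.1.1 * θ x.2) := by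
  rintro ⟨A, g⟩ hx
  obtain ⟨e, he, hκx, habsorb⟩ := exists_idempotent_mul_theta hθ hmul hinv hBR hκmul hκext hx
  have hle : natLe e (I A.1) :=
    (hI A ⟨g, hx⟩).2 e fun _ ⟨a, ha, hfa⟩ => ⟨e, he, hfa ▸ (habsorb a ha).symm⟩
  exact hκx ▸ natLe_mul_right hle (θ g)
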